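/- arXiv:2308.04979 — 2 statements merged into one kernel-verified Lean document; each statement's English description precedes it below -/
import Mathlib

section
/- Let R = K[x_1,...,x_n] be the polynomial ring over a field K, let Δ be a simplicial complex on V = {x_1,...,x_n} with Stanley-Reisner ideal I = I_Δ, and let x be a shedding vertex of Δ. Then Ass(R/I) = Ass(R/(I : x)) ∪ Ass(R/(I, x)). -/
open MvPolynomial

/-- An (abstract) simplicial complex on a vertex set `V`: a collection of finite subsets
of `V` containing all singletons and closed under taking subsets. -/
structure SimplicialComplexOn (V : Type) where
  faces : Set (Finset V)
  singleton_mem : ∀ v : V, {v} ∈ faces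
  down_closed : ∀ {A B : Finset V}, A ∈ faces → B ⊆ A → B ∈ faces

/-- The deletion of a vertex `x`: all faces not containing `x`. -/
def SimplicialComplexOn.del {V : Type} (Δ : SimplicialComplexOn V) (x : V) :
    Set (Finset V) :=
  {F | F ∈ Δ.faces ∧ x ∉ F}

/-- The link of a vertex `x`: all faces `F` with `x ∉ F` and `F ∪ {x}` a face. -/
def SimplicialComplexOn.link {V : Type} [DecidableEq V] (Δ : SimplicialComplexOn V) (x : V) :
    Set (Finset V) :=
  {F | x ∉ F ∧ insert x F ∈ Δ.faces}

/-- `F` is a facet (maximal face) of a collection `S` of faces. -/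
def IsFacetOf {V : Type} (S : Set (Finset V)) (F : Finset V) : Prop :=
  F ∈ S ∧ ∀ G ∈ S, F ⊆ G → F = G

/-- `x` is a shedding vertex of `Δ` if no face of `link_Δ(x)` is a facet of `del_Δ(x)`. -/
def SimplicialComplexOn.IsSheddingVertex {V : Type} [DecidableEq V]
    (Δ : SimplicialComplexOn V) (x : V) : Prop :=
  ∀ F ∈ Δ.link x, ¬ IsFacetOf (Δ.del x) F

/-- The Stanley–Reisner ideal of a simplicial complex on `{x_1, …, x_n}`: the ideal
generated by the squarefree monomials corresponding to non-faces. -/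
noncomputable def srIdeal (n : ℕ) (K : Type) [Field K] (Δ : SimplicialComplexOn (Fin n)) :
    Ideal (MvPolynomial (Fin n) K) :=
  Ideal.span {m | ∃ F : Finset (Fin n), F ∉ Δ.faces ∧ m = ∏ v ∈ F, X v}

/-- The height of a (prime) ideal `p`: the Krull dimension of the set of primes
contained in `p`. -/
noncomputable def idealHeight (R : Type) [CommRing R] (p : Ideal R) : WithBot ℕ∞ :=
  Order.krullDim {q : PrimeSpectrum R // q.asIdeal ≤ p}

/-- An ideal is unmixed if all of its associated primes have the same height. -/
def IsUnmixed (R : Type) [CommRing R] (I : Ideal R) : Prop :=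
  ∀ p ∈ associatedPrimes R (R ⧸ I), ∀ q ∈ associatedPrimes R (R ⧸ I),
    idealHeight R p = idealHeight R q

/-!
For a down-closed family `S` of finite sets of variables, the squarefree monomial ideal `J_S`
generated by the non-faces of `S` is the intersection of the primes `P_F = (x_v : v ∉ F)` over
the facets `F` of `S`. This intersection is irredundant (the monomial `∏_{v ∈ F} x_v` lies in
every `P_G` except `P_F`), so it is a minimal primary decomposition and
`Ass(R/J_S) = {P_F : F facet of S}`.

Now `(I_Δ : x) = J_S` for the closed star `S = {F : F ∪ {x} ∈ Δ}` and `(I_Δ, x) = J_S` for the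
deletion. The facets of the star are the facets of `Δ` through `x`, and, because `x` is a
shedding vertex, the facets of the deletion are exactly the facets of `Δ` avoiding `x`.
-/

theorem isFacetOf_iff_maximal {V : Type} {S : Set (Finset V)} {F : Finset V} :
    IsFacetOf S F ↔ Maximal (· ∈ S) F :=
  maximal_iff.symm

section InsertMem

variable {α : Type*} [DecidableEq α] {S : Set (Finset α)}

theorem IsLowerSet.setOf_insert_mem (hS : IsLowerSet S) (x : α) :
    IsLowerSet {F | insert x F ∈ S} :=
  fun _ _ hGF hG => hS (Finset.insert_subset_insert x hGF) hG

theorem maximal_insert_mem_iff (hS : IsLowerSet S) {x : α} {F : Finset α} :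
    Maximal (· ∈ {G | insert x G ∈ S}) F ↔ Maximal (· ∈ S) F ∧ x ∈ F := by
  constructor
  · intro hF
    have hxF : x ∈ F := by
      have : F = insert x F :=
        hF.eq_of_le (show insert x (insert x F) ∈ S by rw [Finset.insert_idem]; exact hF.prop)
          (Finset.subset_insert x F)
      exact this ▸ Finset.mem_insert_self x F
    have hFS : F ∈ S := Finset.insert_eq_of_mem hxF ▸ hF.prop
    exact ⟨⟨hFS, fun G hG hFG =>
      hF.2 (show insert x G ∈ S by rwa [Finset.insert_eq_of_mem (hFG hxF)]) hFG⟩, hxF⟩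
  · rintro ⟨hF, hxF⟩
    exact ⟨show insert x F ∈ S by simpa only [Finset.insert_eq_of_mem hxF] using hF.prop,
      fun G hG hFG => hF.2 (hS (Finset.subset_insert x G) hG) hFG⟩

end InsertMem

theorem Ideal.associatedPrimes_quotient {A : Type*} [CommRing A] (I : Ideal A) :
    associatedPrimes A (A ⧸ I) = Submodule.associatedPrimes I := by
  have colon_mk (a : A) :
      (⊥ : Submodule A (A ⧸ I)).colon {Ideal.Quotient.mk I a} = I.colon {a} := by
    ext r
    simp [Submodule.mem_colon_singleton, Algebra.smul_def, ← map_mul,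
      Ideal.Quotient.eq_zero_iff_mem]
  ext p
  simp only [AssociatedPrimes.mem_iff, Submodule.AssociatePrimes.mem_iff, IsAssociatedPrime,
    Submodule.isAssociatedPrime_def, Ideal.Quotient.mk_surjective.exists, colon_mk]

namespace MvPolynomial

variable {σ R : Type*}

section CommSemiring

variable [CommSemiring R]

variable (R) in
noncomputable def facePrime (F : Finset σ) : Ideal (MvPolynomial σ R) :=
  Ideal.span (X '' (↑F)ᶜ)

variable (R) in
noncomputable def stanleyReisnerIdeal (S : Set (Finset σ)) : Ideal (MvPolynomial σ R) :=
  Ideal.span {m | ∃ F : Finset σ, F ∉ S ∧ m = ∏ v ∈ F, X v}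

theorem mem_facePrime_iff {F : Finset σ} {f : MvPolynomial σ R} :
    f ∈ facePrime R F ↔ ∀ d ∈ f.support, ¬ d.support ⊆ F := by
  simp [facePrime, mem_ideal_span_X_image, Finset.not_subset, and_comm]

theorem X_mem_facePrime {F : Finset σ} {v : σ} (hv : v ∉ F) :
    (X v : MvPolynomial σ R) ∈ facePrime R F :=
  Ideal.subset_span ⟨v, hv, rfl⟩

theorem prod_X_mem_facePrime {F G : Finset σ} (h : ¬ G ⊆ F) :
    (∏ v ∈ G, X v : MvPolynomial σ R) ∈ facePrime R F := by
  obtain ⟨v, hvG, hvF⟩ := Finset.not_subset.mp h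
  exact Ideal.mem_of_dvd _ (Finset.dvd_prod_of_mem _ hvG) (X_mem_facePrime hvF)

theorem prod_X_support_dvd_monomial (d : σ →₀ ℕ) (c : R) :
    (∏ v ∈ d.support, X v : MvPolynomial σ R) ∣ monomial d c := by
  rw [monomial_eq, Finsupp.prod]
  exact Dvd.dvd.mul_left (Finset.prod_dvd_prod_of_dvd _ _
    fun v hv => dvd_pow_self _ (Finsupp.mem_support_iff.mp hv)) _

theorem mem_stanleyReisnerIdeal_iff [Finite σ] {S : Set (Finset σ)} (hS : IsLowerSet S)
    {f : MvPolynomial σ R} :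
    f ∈ stanleyReisnerIdeal R S ↔ ∀ F, Maximal (· ∈ S) F → f ∈ facePrime R F := by
  refine ⟨fun hf F hF => ?_, fun hf => ?_⟩
  · refine (Ideal.span_le.mpr ?_) hf
    rintro _ ⟨G, hG, rfl⟩
    exact prod_X_mem_facePrime fun hGF => hG (hS hGF hF.prop)
  · rw [f.as_sum]
    refine Ideal.sum_mem _ fun d hd => ?_
    have hdS : d.support ∉ S := fun hdS => by
      obtain ⟨F, hdF, hF⟩ := Finite.exists_le_maximal (p := (· ∈ S)) hdS
      exact mem_facePrime_iff.mp (hf F hF) d hd hdF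
    exact Ideal.mem_of_dvd _ (prod_X_support_dvd_monomial d _) (Ideal.subset_span ⟨_, hdS, rfl⟩)

theorem stanleyReisnerIdeal_sup_span_X (S : Set (Finset σ)) (x : σ) :
    stanleyReisnerIdeal R S ⊔ Ideal.span {X x} =
      stanleyReisnerIdeal R {F | F ∈ S ∧ x ∉ F} := by
  apply le_antisymm
  · refine sup_le (Ideal.span_mono ?_) ?_
    · rintro _ ⟨F, hF, rfl⟩
      exact ⟨F, fun h => hF h.1, rfl⟩
    · rw [Ideal.span_singleton_le_iff_mem]
      exact Ideal.subset_span ⟨{x}, fun h => h.2 (Finset.mem_singleton_self x), by simp⟩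
  · rw [stanleyReisnerIdeal, Ideal.span_le]
    rintro _ ⟨F, hF, rfl⟩
    by_cases hx : x ∈ F
    · exact Ideal.mem_sup_right (Ideal.mem_span_singleton.mpr (Finset.dvd_prod_of_mem _ hx))
    · exact Ideal.mem_sup_left (Ideal.subset_span ⟨F, fun h => hF ⟨h, hx⟩, rfl⟩)

end CommSemiring

section CommRing

variable [CommRing R]

variable (R) in
noncomputable def faceRestriction [DecidableEq σ] (F : Finset σ) :
    MvPolynomial σ R →ₐ[R] MvPolynomial σ R :=
  aeval fun v => if v ∈ F then X v else 0

theorem ker_faceRestriction [DecidableEq σ] (F : Finset σ) :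
    RingHom.ker (faceRestriction R F) = facePrime R F := by
  apply le_antisymm
  · intro f hf
    have hmk : (Ideal.Quotient.mkₐ R (facePrime R F)).comp (faceRestriction R F) =
        Ideal.Quotient.mkₐ R (facePrime R F) := by
      refine algHom_ext fun v => ?_
      by_cases hv : v ∈ F
      · simp [faceRestriction, hv]
      · simp [faceRestriction, hv, eq_comm (a := (0 : _ ⧸ _)), Ideal.Quotient.eq_zero_iff_mem,
          X_mem_facePrime hv]
    rw [← Ideal.Quotient.eq_zero_iff_mem, ← Ideal.Quotient.mkₐ_eq_mk R, ← hmk, AlgHom.comp_apply,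
      RingHom.mem_ker.mp hf, map_zero]
  · rw [facePrime, Ideal.span_le]
    rintro _ ⟨v, hv, rfl⟩
    simp_all [faceRestriction]

theorem prod_X_mem_facePrime_iff [Nontrivial R] {F G : Finset σ} :
    (∏ v ∈ G, X v : MvPolynomial σ R) ∈ facePrime R F ↔ ¬ G ⊆ F := by
  classical
  refine ⟨fun h hGF => ?_, prod_X_mem_facePrime⟩
  rw [← ker_faceRestriction, RingHom.mem_ker, map_prod,
    Finset.prod_congr rfl fun v hv => by rw [faceRestriction, aeval_X, if_pos (hGF hv)]] at h
  exact (isRegular_prod_X G).ne_zero h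

theorem X_mem_facePrime_iff [Nontrivial R] {F : Finset σ} {v : σ} :
    (X v : MvPolynomial σ R) ∈ facePrime R F ↔ v ∉ F := by
  classical
  simpa using prod_X_mem_facePrime_iff (R := R) (F := F) (G := {v})

theorem facePrime_isPrime [IsDomain R] (F : Finset σ) : (facePrime R F).IsPrime := by
  classical
  rw [← ker_faceRestriction]
  exact RingHom.ker_isPrime _

variable [IsDomain R] [Finite σ] {S : Set (Finset σ)}

theorem stanleyReisnerIdeal_colon_X [DecidableEq σ] (hS : IsLowerSet S) (x : σ) :
    (stanleyReisnerIdeal R S).colon ((Ideal.span {X x} : Ideal (MvPolynomial σ R)) : Set _) =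
      stanleyReisnerIdeal R {F | insert x F ∈ S} := by
  ext f
  simp only [Ideal.mem_colon_span_singleton, mem_stanleyReisnerIdeal_iff hS,
    mem_stanleyReisnerIdeal_iff (hS.setOf_insert_mem x), maximal_insert_mem_iff hS,
    (facePrime_isPrime _).mul_mem_iff_mem_or_mem, X_mem_facePrime_iff]
  grind

theorem isMinimalPrimaryDecomposition_stanleyReisnerIdeal (hS : IsLowerSet S) :
    Submodule.IsMinimalPrimaryDecomposition (stanleyReisnerIdeal R S)
      ((Set.toFinite {F | Maximal (· ∈ S) F}).toFinset.image (facePrime R)) where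
  inf_eq := by
    ext f
    simp [Submodule.mem_finsetInf, mem_stanleyReisnerIdeal_iff hS]
  primary := by
    simp only [Finset.mem_image, forall_exists_index, and_imp]
    rintro _ F - rfl
    exact (facePrime_isPrime F).isPrimary
  distinct := by
    have hrad : ∀ J ∈ (Set.toFinite {F | Maximal (· ∈ S) F}).toFinset.image (facePrime R),
        (J.colon Set.univ).radical = J := by
      simp only [Finset.mem_image, forall_exists_index, and_imp]
      rintro _ F - rfl
      rw [Submodule.colon_univ, (facePrime_isPrime F).radical]
    intro J hJ J' hJ' hne
    simpa only [Function.onFun, hrad J hJ, hrad J' hJ'] using hne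
  minimal := by
    simp only [Finset.mem_image, Set.Finite.mem_toFinset, forall_exists_index, and_imp]
    rintro _ F hF rfl hle
    refine prod_X_mem_facePrime_iff.mp (hle (Submodule.mem_finsetInf.mpr ?_)) subset_rfl
    simp only [Finset.mem_erase, Finset.mem_image, Set.Finite.mem_toFinset, ne_eq, id_eq, and_imp,
      forall_exists_index]
    rintro _ hne G hG rfl
    exact prod_X_mem_facePrime fun hFG => hne (by rw [hF.eq_of_le hG.prop hFG])

theorem associatedPrimes_stanleyReisnerIdeal (hS : IsLowerSet S) :
    associatedPrimes (MvPolynomial σ R) (MvPolynomial σ R ⧸ stanleyReisnerIdeal R S) =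
      facePrime R '' {F | Maximal (· ∈ S) F} := by
  rw [Ideal.associatedPrimes_quotient,
    ← (isMinimalPrimaryDecomposition_stanleyReisnerIdeal hS).image_radical_eq_associated_primes,
    Finset.coe_image, Set.Finite.coe_toFinset, Set.image_image]
  refine Set.image_congr fun F _ => ?_
  rw [Submodule.colon_univ, (facePrime_isPrime F).radical]

end CommRing

end MvPolynomial

namespace SimplicialComplexOn

variable {V : Type} (Δ : SimplicialComplexOn V)

theorem isLowerSet_faces : IsLowerSet Δ.faces :=
  fun _ _ hBA hA => Δ.down_closed hA hBA

theorem isLowerSet_del (x : V) : IsLowerSet (Δ.del x) :=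
  fun _ _ hBA hA => ⟨Δ.down_closed hA.1 hBA, fun hx => hA.2 (hBA hx)⟩

theorem maximal_del_iff [DecidableEq V] {x : V} (hx : Δ.IsSheddingVertex x) {F : Finset V} :
    Maximal (· ∈ Δ.del x) F ↔ Maximal (· ∈ Δ.faces) F ∧ x ∉ F := by
  constructor
  · intro hF
    have hxF : insert x F ∉ Δ.faces := fun h =>
      hx F ⟨hF.prop.2, h⟩ (isFacetOf_iff_maximal.mpr hF)
    refine ⟨⟨hF.prop.1, fun G hG hFG => ?_⟩, hF.prop.2⟩
    by_cases hxG : x ∈ G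
    · exact absurd (Δ.down_closed hG (Finset.insert_subset hxG hFG)) hxF
    · exact hF.2 ⟨hG, hxG⟩ hFG
  · rintro ⟨hF, hxF⟩
    exact ⟨⟨hF.prop, hxF⟩, fun G hG hFG => hF.2 hG.1 hFG⟩

end SimplicialComplexOn

/-- If `I = I_Δ` is the Stanley–Reisner ideal of a simplicial complex `Δ` on
`{x_1, …, x_n}` and `x` is a shedding vertex of `Δ`, then
`Ass(R/I) = Ass(R/(I : x)) ∪ Ass(R/(I, x))`. -/
theorem ass_eq_union_of_shedding (n : ℕ) (K : Type) [Field K]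
    (Δ : SimplicialComplexOn (Fin n)) (x : Fin n) (hx : Δ.IsSheddingVertex x)
    (I : Ideal (MvPolynomial (Fin n) K)) (hI : I = srIdeal n K Δ) :
    associatedPrimes (MvPolynomial (Fin n) K) (MvPolynomial (Fin n) K ⧸ I) =
      associatedPrimes (MvPolynomial (Fin n) K)
          (MvPolynomial (Fin n) K ⧸ I.colon ((Ideal.span {X x} : Ideal (MvPolynomial (Fin n) K)) : Set (MvPolynomial (Fin n) K))) ∪
        associatedPrimes (MvPolynomial (Fin n) K)
          (MvPolynomial (Fin n) K ⧸ (I ⊔ Ideal.span {X x})) := by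
  have hI' : I = stanleyReisnerIdeal K Δ.faces := hI
  have hfacets : {F | Maximal (· ∈ Δ.faces) F} =
      {F | Maximal (· ∈ {G | insert x G ∈ Δ.faces}) F} ∪ {F | Maximal (· ∈ Δ.del x) F} := by
    ext F
    change Maximal _ F ↔ Maximal _ F ∨ Maximal _ F
    rw [maximal_insert_mem_iff Δ.isLowerSet_faces, Δ.maximal_del_iff hx]
    tauto
  rw [hI', stanleyReisnerIdeal_colon_X Δ.isLowerSet_faces, stanleyReisnerIdeal_sup_span_X,
    associatedPrimes_stanleyReisnerIdeal Δ.isLowerSet_faces,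
    associatedPrimes_stanleyReisnerIdeal (Δ.isLowerSet_faces.setOf_insert_mem x),
    associatedPrimes_stanleyReisnerIdeal (S := {F | F ∈ Δ.faces ∧ x ∉ F}) (Δ.isLowerSet_del x),
    hfacets, Set.image_union]
  rfl
end

section
/- Let G be a connected finite simple graph containing a basic 5-cycle. Then every vertex of degree at least 3 in the basic 5-cycle is a shedding vertex of G. -/
open MvPolynomial

/-- The independence complex of a graph: faces are the independent sets. -/
def independenceComplex (V : Type) [DecidableEq V] (G : SimpleGraph V) :
    SimplicialComplexOn V where
  faces := {F | ∀ u ∈ F, ∀ v ∈ F, ¬ G.Adj u v}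
  singleton_mem := by
    intro v u hu w hw
    simp only [Finset.mem_singleton] at hu hw
    subst hu; subst hw
    exact G.irrefl
  down_closed := by
    intro A B hA hBA u hu v hv
    exact hA u (hBA hu) v (hBA hv)

/-- A `5`-cycle in a graph, given by five distinct vertices that are cyclically adjacent. -/
def IsFiveCycle {V : Type} (G : SimpleGraph V) (c : Fin 5 → V) : Prop :=
  Function.Injective c ∧ ∀ i : Fin 5, G.Adj (c i) (c (i + 1))

/-- A basic `5`-cycle: a `5`-cycle which does not contain two adjacent vertices of
degree three or more in `G`. -/
def IsBasicFiveCycle {V : Type} [Fintype V] (G : SimpleGraph V) [DecidableRel G.Adj]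
    (c : Fin 5 → V) : Prop :=
  IsFiveCycle G c ∧
    ∀ i j : Fin 5, G.Adj (c i) (c j) → ¬ (3 ≤ G.degree (c i) ∧ 3 ≤ G.degree (c j))

/-- The induced subgraph obtained from `G` by deleting the vertices in `s`
(keeping the ambient vertex type). -/
def graphDelete {V : Type} (G : SimpleGraph V) (s : Set V) : SimpleGraph V where
  Adj u v := G.Adj u v ∧ u ∉ s ∧ v ∉ s
  symm := by
    constructor
    intro u v h
    exact ⟨h.1.symm, h.2.2, h.2.1⟩
  loopless := by
    constructor
    intro v h
    exact G.irrefl h.1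

/-- The closed neighborhood `N[x] = N(x) ∪ {x}` of a vertex. -/
def closedNbhd {V : Type} (G : SimpleGraph V) (x : V) : Set V :=
  insert x (G.neighborSet x)

/-- The edge ideal of a graph on `{x_1, …, x_n}`. -/
noncomputable def edgeIdeal (n : ℕ) (K : Type) [Field K] (G : SimpleGraph (Fin n)) :
    Ideal (MvPolynomial (Fin n) K) :=
  Ideal.span {m | ∃ u v : Fin n, G.Adj u v ∧ m = X u * X v}

/-! Let `x` have degree at least three on a basic 5-cycle `x a b b' a'`. Basicness forces `a` and
`a'` to have degree two, so their only neighbours are `x, b` and `x, b'`. A face `F` of the link of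
`x` is an independent set avoiding `x`, hence misses `b` or `b'`, say `b`; then `a` has no neighbour
in `F`, and `F ∪ {a}` is a strictly larger face of the deletion of `x`. -/

theorem SimpleGraph.neighborFinset_eq_pair_of_degree_le_two {V : Type} [Fintype V]
    [DecidableEq V] {G : SimpleGraph V} [DecidableRel G.Adj] {a x y : V}
    (hdeg : G.degree a ≤ 2) (hx : G.Adj a x) (hy : G.Adj a y) (hxy : x ≠ y) :
    G.neighborFinset a = {x, y} := by
  refine (Finset.eq_of_subset_of_card_le ?_ ?_).symm
  · intro v hv
    rcases Finset.mem_insert.1 hv with rfl | hv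
    · exact (G.mem_neighborFinset _ _).2 hx
    · exact Finset.mem_singleton.1 hv ▸ (G.mem_neighborFinset _ _).2 hy
  · rw [Finset.card_pair hxy]
    exact hdeg

theorem IsBasicFiveCycle.degree_le_two_of_adj {V : Type} [Fintype V] {G : SimpleGraph V}
    [DecidableRel G.Adj] {c : Fin 5 → V} (hc : IsBasicFiveCycle G c) {i j : Fin 5}
    (hdeg : 3 ≤ G.degree (c i)) (hadj : G.Adj (c i) (c j)) : G.degree (c j) ≤ 2 := by
  by_contra! h
  exact hc.2 i j hadj ⟨hdeg, h⟩

section independenceComplex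

variable {V : Type} [DecidableEq V] {G : SimpleGraph V}

theorem not_isFacetOf_del_independenceComplex_of_adj {F : Finset V} {x a : V}
    (hF : F ∈ (independenceComplex V G).link x) (hxa : G.Adj x a)
    (ha : ∀ v ∈ F, ¬ G.Adj a v) : ¬ IsFacetOf ((independenceComplex V G).del x) F := by
  obtain ⟨hxF, hxFindep⟩ := hF
  have hFindep : F ∈ (independenceComplex V G).faces :=
    (independenceComplex V G).down_closed hxFindep (Finset.subset_insert _ _)
  have haF : a ∉ F := fun h =>
    hxFindep x (Finset.mem_insert_self _ _) a (Finset.mem_insert_of_mem h) hxa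
  have haFindep : insert a F ∈ (independenceComplex V G).faces := by
    intro u hu v hv huv
    rcases Finset.mem_insert.1 hu with rfl | huF <;> rcases Finset.mem_insert.1 hv with rfl | hvF
    · exact G.irrefl huv
    · exact ha v hvF huv
    · exact ha u huF huv.symm
    · exact hFindep u huF v hvF huv
  have hxaF : x ∉ insert a F := by
    rintro hx
    rcases Finset.mem_insert.1 hx with rfl | hx
    · exact G.irrefl hxa
    · exact hxF hx
  intro hfacet
  exact haF (hfacet.2 _ ⟨haFindep, hxaF⟩ (Finset.subset_insert _ _) ▸ Finset.mem_insert_self a F)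

theorem isSheddingVertex_independenceComplex_of_neighborSet_subset_pair {x a b a' b' : V}
    (hxa : G.Adj x a) (hxa' : G.Adj x a') (hbb' : G.Adj b b')
    (ha : G.neighborSet a ⊆ {x, b}) (ha' : G.neighborSet a' ⊆ {x, b'}) :
    (independenceComplex V G).IsSheddingVertex x := by
  intro F hF
  have only_cycle_nbr : ∀ {a b : V}, G.neighborSet a ⊆ {x, b} → b ∉ F →
      ∀ v ∈ F, ¬ G.Adj a v := by
    intro a b ha hb v hv hav
    rcases ha hav with rfl | rfl
    · exact hF.1 hv
    · exact hb hv
  by_cases hb : b ∈ F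
  · have hb' : b' ∉ F := fun hb' =>
      hF.2 b (Finset.mem_insert_of_mem hb) b' (Finset.mem_insert_of_mem hb') hbb'
    exact not_isFacetOf_del_independenceComplex_of_adj hF hxa' (only_cycle_nbr ha' hb')
  · exact not_isFacetOf_del_independenceComplex_of_adj hF hxa (only_cycle_nbr ha hb)

end independenceComplex

theorem shedding_of_degree_ge_three_on_basic_five_cycle_general (V : Type) [Fintype V] [DecidableEq V]
    (G : SimpleGraph V) [DecidableRel G.Adj]
    (c : Fin 5 → V) (hc : IsBasicFiveCycle G c) (i : Fin 5) (hdeg : 3 ≤ G.degree (c i)) :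
    (independenceComplex V G).IsSheddingVertex (c i) := by
  obtain ⟨hinj, hadj⟩ := hc.1
  have adj_succ : ∀ k : Fin 5, G.Adj (c (i + k)) (c (i + (k + 1))) := fun k => by
    simpa [add_assoc] using hadj (i + k)
  have hx1 : G.Adj (c i) (c (i + 1)) := by simpa using adj_succ 0
  have hx4 : G.Adj (c i) (c (i + 4)) := by simpa [add_assoc] using (adj_succ 4).symm
  have nbr_pair : ∀ {j k : Fin 5}, G.Adj (c i) (c j) → G.Adj (c j) (c k) → i ≠ k →
      G.neighborSet (c j) ⊆ {c i, c k} := fun hij hjk hik v hv => by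
    have h := G.neighborFinset_eq_pair_of_degree_le_two (hc.degree_le_two_of_adj hdeg hij)
      hij.symm hjk (hinj.ne hik)
    simpa [h] using (G.mem_neighborFinset _ _).2 hv
  exact isSheddingVertex_independenceComplex_of_neighborSet_subset_pair hx1 hx4 (adj_succ 2)
    (nbr_pair hx1 (adj_succ 1) (by omega)) (nbr_pair hx4 (adj_succ 3).symm (by omega))

/-- In a connected graph, every vertex of degree at least `3` lying on a basic `5`-cycle
is a shedding vertex of the independence complex. -/
theorem shedding_of_degree_ge_three_on_basic_five_cycle (V : Type) [Fintype V] [DecidableEq V]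
    (G : SimpleGraph V) [DecidableRel G.Adj] (hconn : G.Connected)
    (c : Fin 5 → V) (hc : IsBasicFiveCycle G c) (i : Fin 5) (hdeg : 3 ≤ G.degree (c i)) :
    (independenceComplex V G).IsSheddingVertex (c i) :=
  shedding_of_degree_ge_three_on_basic_five_cycle_general V G c hc i hdeg
end
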